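/- Fix n ≥ 2 and 0 < p < 1. Let f : ℤ → ℝ be f(−1) = p, f(0) = 1 − p, f(m) = 0 otherwise. Define on W_n the kernel P_n(x,y) = (Δ_n(y)/Δ_n(x)) det(f(x_i − y_j))_{i,j=1}^n, similarly P_{n−1} on W_{n−1}, and define the link Λⁿ_{n−1}(x, y) = (n−1)! (Δ_{n−1}(y)/Δ_n(x)) 1_{[y ≺ x]} from W_n to W_{n−1}. Then the intertwining relation P_n Λⁿ_{n−1} = Λⁿ_{n−1} P_{n−1} holds: for all x ∈ W_n and z ∈ W_{n−1}, ∑_{y ∈ W_n} P_n(x,y) Λⁿ_{n−1}(y,z) = ∑_{w ∈ W_{n−1}} Λⁿ_{n−1}(x,w) P_{n−1}(w,z) (both sums are finite). -/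

import Mathlib

open scoped Classical

/-- The Vandermonde determinant `Δ_n(x) = ∏_{1 ≤ i < j ≤ n} (x_j - x_i)` of an integer vector. -/
def vandermondeProd {n : ℕ} (x : Fin n → ℤ) : ℤ :=
  ∏ p ∈ Finset.univ.filter (fun p : Fin n × Fin n => p.1 < p.2), (x p.2 - x p.1)

/-- `y` (one level down, `m` entries) interlaces with `x` (`m+1` entries):
`x_k < y_k ≤ x_{k+1}` for all `k`. -/
def Interlace {m : ℕ} (y : Fin m → ℤ) (x : Fin (m + 1) → ℤ) : Prop :=
  ∀ i : Fin m, x i.castSucc < y i ∧ y i ≤ x i.succ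

/-- One-step transition weight of a single Bernoulli(p) walker: `f(-1) = p`, `f(0) = 1 - p`,
and `f(m) = 0` otherwise. -/
def bern (p : ℝ) : ℤ → ℝ := fun m => if m = -1 then p else if m = 0 then 1 - p else 0

/-- One-step transition probability of the discrete-time Charlier process with `n` walkers:
`P_n(x,y) = (Δ_n(y)/Δ_n(x)) · det(f(x_i - y_j))_{i,j=1}^n`. -/
noncomputable def charlierP (p : ℝ) {n : ℕ} (x y : Fin n → ℤ) : ℝ :=
  ((vandermondeProd y : ℝ) / (vandermondeProd x : ℝ)) *
    (Matrix.of fun i j : Fin n => bern p (x i - y j)).det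

/-- The Markov link `Λⁿ_{n-1}(x, y) = (n-1)! Δ_{n-1}(y)/Δ_n(x) · 1_{[y ≺ x]}`
(here `n = m + 1`). -/
noncomputable def linkKernel {m : ℕ} (x : Fin (m + 1) → ℤ) (y : Fin m → ℤ) : ℝ :=
  (m.factorial : ℝ) * ((vandermondeProd y : ℝ) / (vandermondeProd x : ℝ)) *
    (if Interlace y x then 1 else 0)

/-!
For strictly increasing `x` and `y` only the identity permutation contributes to
`det (f (x i - y j))`, so `P_n(x, y) = Δ(y)/Δ(x) ∏ f(x_i - y_i)`: the walkers move by independent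
Bernoulli(p) steps. The Vandermonde factors of `P` and `Λ` then cancel, and both sides equal
`(n-1)! Δ(z)/Δ(x)` times the probability that independent steps (of `x` up to `y` on the left,
of `w` up to `z` on the right) produce an interlacing pair. Each step enters at most one upper
and one lower interlacing constraint, and these are independent unless both bind at the same
point, which the strict increase of `z` (resp. `x`) forbids. Hence both probabilities factor
into `∏_j P(x_j + ξ < z_j) P(z_j ≤ x_{j+1} + ξ)`.
-/

open Finset

lemma finsum_mem_eq_sum_of_indicator_eq {α M : Type*} [AddCommMonoid M] {s : Set α}
    {f g : α → M} {t : Finset α} (hfg : s.indicator f = g) (hg : Function.support g ⊆ t) :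
    ∑ᶠ a ∈ s, f a = ∑ a ∈ t, g a := by
  rw [finsum_mem_def, hfg, finsum_eq_sum_of_support_subset g hg]

lemma vandermondeProd_pos {n : ℕ} {x : Fin n → ℤ} (hx : StrictMono x) : 0 < vandermondeProd x :=
  prod_pos fun _ hq => sub_pos.2 (hx (mem_filter.1 hq).2)

lemma Interlace.strictMono_left {m : ℕ} {w : Fin m → ℤ} {x : Fin (m + 1) → ℤ}
    (hx : Monotone x) (h : Interlace w x) : StrictMono w := fun i j hij =>
  calc w i ≤ x i.succ := (h i).2
    _ ≤ x j.castSucc := hx (Fin.succ_le_castSucc_iff.2 hij)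
    _ < w j := (h j).1

lemma Interlace.strictMono_right {m : ℕ} {z : Fin m → ℤ} {y : Fin (m + 1) → ℤ}
    (h : Interlace z y) : StrictMono y :=
  Fin.strictMono_iff_lt_succ.2 fun i => (h i).1.trans_le (h i).2

lemma Interlace.iff_forall_between {m : ℕ} {z : Fin m → ℤ} {y : Fin (m + 1) → ℤ} {a b : ℤ}
    (ha : a ≤ y 0) (hb : y (Fin.last m) < b) :
    Interlace z y ↔ ∀ i, (Fin.cons a z : Fin (m + 1) → ℤ) i ≤ y i ∧
      y i < (Fin.snoc z b : Fin (m + 1) → ℤ) i := by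
  simp only [Interlace, forall_and]
  rw [Fin.forall_fin_succ, Fin.forall_fin_succ' (P := fun i => y i < _)]
  simp [ha, hb, and_comm]

section

variable {p : ℝ}

lemma eq_neg_one_or_eq_zero_of_bern_ne_zero {t : ℤ} (h : bern p t ≠ 0) : t = -1 ∨ t = 0 := by
  unfold bern at h
  split_ifs at h <;> simp_all

/-- A permutation contributing to the determinant must pair each `y j` with an `x (σ j)` at
distance `0` or `1`; as both vectors increase strictly, `σ` is monotone, hence the identity. -/
lemma det_bern_eq_prod {n : ℕ} {x y : Fin n → ℤ} (hx : StrictMono x) (hy : StrictMono y) :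
    (Matrix.of fun i j : Fin n => bern p (x i - y j)).det = ∏ i, bern p (x i - y i) := by
  rw [Matrix.det_apply, sum_eq_single 1 (fun σ _ hσ => ?_) (by simp)]
  · simp
  suffices ∏ i, bern p (x (σ i) - y i) = 0 by simp [this]
  by_contra hprod
  have hclose : ∀ i, x (σ i) ≤ y i ∧ y i ≤ x (σ i) + 1 := fun i => by
    rcases eq_neg_one_or_eq_zero_of_bern_ne_zero (prod_ne_zero_iff.1 hprod i (mem_univ i))
      with h | h <;> omega
  have hσ_mono : StrictMono σ := fun i j hij => by
    by_contra hji
    have := hx (lt_of_le_of_ne (not_lt.1 hji) (σ.injective.ne hij.ne'))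
    have := hy hij
    have := hclose i
    have := hclose j
    omega
  exact hσ (Equiv.ext fun i => hσ_mono.apply_eq)

lemma charlierP_eq {n : ℕ} {x y : Fin n → ℤ} (hx : StrictMono x) (hy : StrictMono y) :
    charlierP p x y = vandermondeProd y / vandermondeProd x * ∏ i, bern p (x i - y i) := by
  rw [charlierP, det_bern_eq_prod hx hy]

lemma mem_piFinset_upSteps_of_prod_bern_ne_zero {n : ℕ} {a y : Fin n → ℤ}
    (h : ∏ i, bern p (a i - y i) ≠ 0) : y ∈ Fintype.piFinset fun i => {a i, a i + 1} := by
  refine Fintype.mem_piFinset.2 fun i => ?_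
  rcases eq_neg_one_or_eq_zero_of_bern_ne_zero (prod_ne_zero_iff.1 h i (mem_univ i)) with h | h
    <;> simp only [mem_insert, mem_singleton] <;> omega

lemma mem_piFinset_downSteps_of_prod_bern_ne_zero {n : ℕ} {w c : Fin n → ℤ}
    (h : ∏ i, bern p (w i - c i) ≠ 0) : w ∈ Fintype.piFinset fun i => {c i - 1, c i} := by
  refine Fintype.mem_piFinset.2 fun i => ?_
  rcases eq_neg_one_or_eq_zero_of_bern_ne_zero (prod_ne_zero_iff.1 h i (mem_univ i)) with h | h
    <;> simp only [mem_insert, mem_singleton] <;> omega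

/-- For a step `ξ ∈ {0, 1}` equal to `1` with probability `p`, these are `P(ξ < d)` and
`P(e ≤ ξ)`. -/
def probStepLt (p : ℝ) (d : ℤ) : ℝ :=
  (1 - p) * (if 0 < d then 1 else 0) + p * (if 1 < d then 1 else 0)

def probStepGe (p : ℝ) (e : ℤ) : ℝ :=
  (1 - p) * (if e ≤ 0 then 1 else 0) + p * (if e ≤ 1 then 1 else 0)

lemma sum_bern_up_mul_between (a L U : ℤ) (h : ¬(L = a + 1 ∧ U = a + 1)) :
    ∑ t ∈ {a, a + 1}, bern p (a - t) * (if L ≤ t ∧ t < U then 1 else 0)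
      = probStepLt p (U - a) * probStepGe p (L - a) := by
  rw [sum_pair (by omega)]
  norm_num [bern, probStepLt, probStepGe]
  split_ifs <;> first | ring1 | omega

lemma sum_bern_down_mul_between (c a b : ℤ) (hab : a < b) :
    ∑ t ∈ {c - 1, c}, bern p (t - c) * (if a < t ∧ t ≤ b then 1 else 0)
      = probStepLt p (c - a) * probStepGe p (c - b) := by
  rw [sum_pair (by omega)]
  norm_num [bern, probStepLt, probStepGe]
  split_ifs <;> first | ring1 | omega

section Walkers

variable {m : ℕ} {x : Fin (m + 1) → ℤ} {z : Fin m → ℤ}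

/-- The interlacing constraint splits into one window `[L i, U i)` per walker `y i`; the outer
windows are closed off by bounds `x 0` and `x (last m) + 2` that no step from `x` can reach. -/
lemma sum_up_steps_interlace (hz : StrictMono z) :
    ∑ y ∈ Fintype.piFinset (fun i => {x i, x i + 1}),
        (∏ i, bern p (x i - y i)) * (if Interlace z y then 1 else 0)
      = ∏ j, probStepLt p (z j - x j.castSucc) * probStepGe p (z j - x j.succ) := by
  obtain ⟨L, hL⟩ : ∃ L : Fin (m + 1) → ℤ, L = Fin.cons (x 0) z := ⟨_, rfl⟩
  obtain ⟨U, hU⟩ : ∃ U : Fin (m + 1) → ℤ, U = Fin.snoc z (x (Fin.last m) + 2) := ⟨_, rfl⟩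
  have hwindows : ∀ y ∈ Fintype.piFinset (fun i => {x i, x i + 1}),
      (∏ i, bern p (x i - y i)) * (if Interlace z y then 1 else 0)
        = ∏ i, bern p (x i - y i) * (if L i ≤ y i ∧ y i < U i then 1 else 0) := by
    intro y hy
    have hstep : ∀ i, y i = x i ∨ y i = x i + 1 := by simpa using Fintype.mem_piFinset.1 hy
    have h0 := hstep 0
    have hlast := hstep (Fin.last m)
    rw [prod_mul_distrib, Fintype.prod_boole, hL, hU]
    congr 1
    convert rfl using 2
    exact (Interlace.iff_forall_between (z := z) (y := y) (a := x 0) (b := x (Fin.last m) + 2)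
      (by omega) (by omega)).symm
  have hnondeg : ∀ i, ¬(L i = x i + 1 ∧ U i = x i + 1) := by
    rintro i ⟨hLi, hUi⟩
    rcases Fin.eq_zero_or_eq_succ i with rfl | ⟨j, rfl⟩
    · rw [hL, Fin.cons_zero] at hLi
      omega
    rw [hL, Fin.cons_succ] at hLi
    rcases Fin.eq_castSucc_or_eq_last j.succ with ⟨k, hk⟩ | hk
    · rw [hk] at hLi hUi
      simp only [hU, Fin.snoc_castSucc] at hUi
      have := congrArg Fin.val hk
      have := hz (show j < k by simp at this; omega)
      omega
    · rw [hk] at hUi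
      simp only [hU, Fin.snoc_last] at hUi
      omega
  rw [sum_congr rfl hwindows, ← prod_univ_sum (fun i => {x i, x i + 1})
      (fun i t => bern p (x i - t) * if L i ≤ t ∧ t < U i then 1 else 0),
    prod_congr rfl fun i _ => sum_bern_up_mul_between (x i) (L i) (U i) (hnondeg i),
    prod_mul_distrib, Fin.prod_univ_castSucc, Fin.prod_univ_succ]
  have hLt_two : probStepLt p 2 = 1 := by norm_num [probStepLt]
  have hGe_zero : probStepGe p 0 = 1 := by norm_num [probStepGe]
  simp only [hL, hU, Fin.snoc_castSucc, Fin.snoc_last, Fin.cons_zero, Fin.cons_succ,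
    add_sub_cancel_left, sub_self, hLt_two, hGe_zero, mul_one, one_mul, prod_mul_distrib]

lemma sum_down_steps_interlace (hx : StrictMono x) :
    ∑ w ∈ Fintype.piFinset (fun j => {z j - 1, z j}),
        (if Interlace w x then 1 else 0) * ∏ j, bern p (w j - z j)
      = ∏ j, probStepLt p (z j - x j.castSucc) * probStepGe p (z j - x j.succ) := by
  have hfactor : ∀ w : Fin m → ℤ, (if Interlace w x then 1 else 0) * ∏ j, bern p (w j - z j)
      = ∏ j, bern p (w j - z j) * if x j.castSucc < w j ∧ w j ≤ x j.succ then 1 else 0 := by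
    intro w
    rw [prod_mul_distrib, Fintype.prod_boole, mul_comm]
    convert rfl using 3
    exact Iff.rfl
  rw [sum_congr rfl fun w _ => hfactor w, ← prod_univ_sum (fun j => {z j - 1, z j})
    (fun j t => bern p (t - z j) * if x j.castSucc < t ∧ t ≤ x j.succ then 1 else 0)]
  exact prod_congr rfl fun j _ => sum_bern_down_mul_between _ _ _ (hx Fin.castSucc_lt_succ)

lemma charlierP_mul_linkKernel {y : Fin (m + 1) → ℤ} (hx : StrictMono x) (hy : StrictMono y) :
    charlierP p x y * linkKernel y z = m.factorial * (vandermondeProd z / vandermondeProd x) *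
      ((∏ i, bern p (x i - y i)) * if Interlace z y then 1 else 0) := by
  have hy₀ : (vandermondeProd y : ℝ) ≠ 0 := mod_cast (vandermondeProd_pos hy).ne'
  rw [charlierP_eq hx hy, linkKernel]
  field_simp

lemma linkKernel_mul_charlierP {w : Fin m → ℤ} (hw : StrictMono w) (hz : StrictMono z) :
    linkKernel x w * charlierP p w z = m.factorial * (vandermondeProd z / vandermondeProd x) *
      ((if Interlace w x then 1 else 0) * ∏ j, bern p (w j - z j)) := by
  have hw₀ : (vandermondeProd w : ℝ) ≠ 0 := mod_cast (vandermondeProd_pos hw).ne'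
  rw [charlierP_eq hw hz, linkKernel]
  field_simp

lemma finsum_charlierP_mul_linkKernel (hx : StrictMono x) :
    ∑ᶠ y ∈ {y : Fin (m + 1) → ℤ | StrictMono y}, charlierP p x y * linkKernel y z
      = m.factorial * (vandermondeProd z / vandermondeProd x) *
        ∑ y ∈ Fintype.piFinset (fun i => {x i, x i + 1}),
          (∏ i, bern p (x i - y i)) * if Interlace z y then 1 else 0 := by
  rw [mul_sum]
  refine finsum_mem_eq_sum_of_indicator_eq (funext fun y => ?_) fun y hsupp => ?_
  · by_cases hy : StrictMono y
    · simp [hy, charlierP_mul_linkKernel hx hy]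
    · have : ¬Interlace z y := fun h => hy h.strictMono_right
      simp [hy, this]
  · exact mem_piFinset_upSteps_of_prod_bern_ne_zero
      (left_ne_zero_of_mul (right_ne_zero_of_mul hsupp))

lemma finsum_linkKernel_mul_charlierP (hx : StrictMono x) (hz : StrictMono z) :
    ∑ᶠ w ∈ {w : Fin m → ℤ | StrictMono w}, linkKernel x w * charlierP p w z
      = m.factorial * (vandermondeProd z / vandermondeProd x) *
        ∑ w ∈ Fintype.piFinset (fun j => {z j - 1, z j}),
          (if Interlace w x then 1 else 0) * ∏ j, bern p (w j - z j) := by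
  rw [mul_sum]
  refine finsum_mem_eq_sum_of_indicator_eq (funext fun w => ?_) fun w hsupp => ?_
  · by_cases hw : StrictMono w
    · simp [hw, linkKernel_mul_charlierP hw hz]
    · have : ¬Interlace w x := fun h => hw (h.strictMono_left hx.monotone)
      simp [hw, this]
  · exact mem_piFinset_downSteps_of_prod_bern_ne_zero
      (right_ne_zero_of_mul (right_ne_zero_of_mul hsupp))

end Walkers

end

theorem charlier_intertwining_general (m : ℕ) (p : ℝ)
    (x : Fin (m + 1) → ℤ) (hx : StrictMono x) (z : Fin m → ℤ) (hz : StrictMono z) :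
    ∑ᶠ y ∈ {y : Fin (m + 1) → ℤ | StrictMono y}, charlierP p x y * linkKernel y z
      = ∑ᶠ w ∈ {w : Fin m → ℤ | StrictMono w}, linkKernel x w * charlierP p w z := by
  rw [finsum_charlierP_mul_linkKernel hx, finsum_linkKernel_mul_charlierP hx hz,
    sum_up_steps_interlace hz, sum_down_steps_interlace hx]

/-- The intertwining relation `P_n Λⁿ_{n-1} = Λⁿ_{n-1} P_{n-1}` (here `n = m + 1 ≥ 2`):
for all `x ∈ W_n` and `z ∈ W_{n-1}`,
`∑_{y ∈ W_n} P_n(x,y) Λⁿ_{n-1}(y,z) = ∑_{w ∈ W_{n-1}} Λⁿ_{n-1}(x,w) P_{n-1}(w,z)`. -/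
theorem charlier_intertwining (m : ℕ) (hm : 1 ≤ m) (p : ℝ) (hp : 0 < p) (hp1 : p < 1)
    (x : Fin (m + 1) → ℤ) (hx : StrictMono x) (z : Fin m → ℤ) (hz : StrictMono z) :
    ∑ᶠ y ∈ {y : Fin (m + 1) → ℤ | StrictMono y}, charlierP p x y * linkKernel y z
      = ∑ᶠ w ∈ {w : Fin m → ℤ | StrictMono w}, linkKernel x w * charlierP p w z :=
  charlier_intertwining_general m p x hx z hz
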